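/- Let ψ : {1,…,n} → ℂ and let P be the homogeneous operator of degree 0 associated to ψ, i.e. P(e_i) = ψ(i)·e_i for all i. Suppose P is a Reynolds operator, i.e. P(x)·P(y) = P(x·P(y) + P(x)·y − P(x)·P(y)) for all x, y ∈ A, and suppose ψ(t) = 0 for all 1 ≤ t ≤ ⌊n/2⌋. Then ψ is nonzero at most at one index: for all r, s with ⌊n/2⌋ < r < s ≤ n, either ψ(r) = 0 or ψ(s) = 0. -/

import Mathlib

open Finset

/- If `ψ a = 0`, the Reynolds identity for `x = e_a`, `y = e_r` collapses to
`0 = P (e_a · ψ(r) e_r) = ψ(r) ψ(a + r) e_{a+r}`. For `⌊n/2⌋ < r < s ≤ n` the gap `a = s - r`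
lies in `{1, …, ⌊n/2⌋}`, where `ψ` vanishes. -/

/-- Coordinate space of the `n`-dimensional complex null-filiform associative algebra,
with respect to the basis `e_1, …, e_n` (coordinate `m : Fin n` corresponds to `e_{m+1}`). -/
abbrev NF (n : ℕ) : Type := Fin n → ℂ

/-- Multiplication of the null-filiform algebra: `e_i · e_j = e_{i+j}` if `i + j ≤ n`
and `e_i · e_j = 0` if `i + j > n`, extended bilinearly. -/
noncomputable def nfMul {n : ℕ} (x y : NF n) : NF n :=
  fun m => ∑ i : Fin n, ∑ j : Fin n,
    if (i : ℕ) + (j : ℕ) + 1 = (m : ℕ) then x i * y j else 0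

/-- The basis element `e_k`, for `1 ≤ k ≤ n` (it is `0` if `k = 0` or `k > n`). -/
noncomputable def nfE (n k : ℕ) : NF n := fun m => if (m : ℕ) + 1 = k then 1 else 0

/-- The `k`-th power (for `k ≥ 1`) of an element of the null-filiform algebra. -/
noncomputable def nfPow {n : ℕ} (x : NF n) : ℕ → NF n
  | 0 => 0
  | 1 => x
  | k + 2 => nfMul (nfPow x (k + 1)) x

lemma nfMul_zero_left {n : ℕ} (y : NF n) : nfMul 0 y = 0 := by
  funext m
  simp [nfMul]

lemma nfMul_smul_right {n : ℕ} (c : ℂ) (x y : NF n) :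
    nfMul x (c • y) = c • nfMul x y := by
  funext m
  simp only [nfMul, Pi.smul_apply, smul_eq_mul, Finset.mul_sum, mul_ite, mul_zero]
  exact Finset.sum_congr rfl fun i _ => Finset.sum_congr rfl fun j _ => by ring_nf

lemma nfE_apply_of_lt {n k : ℕ} (hk : k < n) : nfE n (k + 1) ⟨k, hk⟩ = 1 := by
  simp [nfE]

lemma nfE_ne_zero {n k : ℕ} (hk : 1 ≤ k) (hkn : k ≤ n) : nfE n k ≠ 0 := by
  obtain ⟨k, rfl⟩ : ∃ k', k = k' + 1 := ⟨k - 1, by omega⟩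
  intro h
  simpa [h] using nfE_apply_of_lt (n := n) (k := k) (by omega)

lemma nfMul_nfE {n i j : ℕ} (hi : 1 ≤ i) (hin : i ≤ n) (hj : 1 ≤ j) (hjn : j ≤ n) :
    nfMul (nfE n i) (nfE n j) = nfE n (i + j) := by
  obtain ⟨i, rfl⟩ : ∃ i', i = i' + 1 := ⟨i - 1, by omega⟩
  obtain ⟨j, rfl⟩ : ∃ j', j = j' + 1 := ⟨j - 1, by omega⟩
  funext m
  simp only [nfMul, nfE]
  rw [Finset.sum_eq_single (⟨i, by omega⟩ : Fin n)]
  · rw [Finset.sum_eq_single (⟨j, by omega⟩ : Fin n)]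
    · have hiff : (i + j + 1 = (m : ℕ)) ↔ ((m : ℕ) + 1 = i + 1 + (j + 1)) := by omega
      simp [hiff]
    · intro b _ hb
      have : (b : ℕ) ≠ j := fun h => hb (Fin.ext h)
      simp [this]
    · simp
  · intro b _ hb
    have : (b : ℕ) ≠ i := fun h => hb (Fin.ext h)
    simp [this]
  · simp

lemma mul_eq_zero_of_reynolds_of_eq_zero {n : ℕ} {ψ : ℕ → ℂ} {P : NF n →ₗ[ℂ] NF n}
    (hP : ∀ i, 1 ≤ i → i ≤ n → P (nfE n i) = ψ i • nfE n i)
    (hRey : ∀ x y : NF n,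
      nfMul (P x) (P y) = P (nfMul x (P y) + nfMul (P x) y - nfMul (P x) (P y)))
    {a r : ℕ} (ha : 1 ≤ a) (hr : 1 ≤ r) (har : a + r ≤ n) (hψa : ψ a = 0) :
    ψ r * ψ (a + r) = 0 := by
  have hPa : P (nfE n a) = 0 := by rw [hP a ha (by omega), hψa, zero_smul]
  have key : (0 : NF n) = (ψ r * ψ (a + r)) • nfE n (a + r) := by
    have h := hRey (nfE n a) (nfE n r)
    rw [hPa, hP r hr (by omega), nfMul_zero_left, nfMul_zero_left, nfMul_smul_right,
      nfMul_nfE ha (by omega) hr (by omega), sub_zero, add_zero, map_smul,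
      hP (a + r) (by omega) har] at h
    rwa [mul_smul]
  exact (smul_eq_zero.mp key.symm).resolve_right (nfE_ne_zero (by omega) har)

theorem reynolds_degree0_case_b_general (n : ℕ) (ψ : ℕ → ℂ)
    (P : NF n →ₗ[ℂ] NF n)
    (hP : ∀ i, 1 ≤ i → i ≤ n → P (nfE n i) = ψ i • nfE n i)
    (hRey : ∀ x y : NF n,
      nfMul (P x) (P y) =
        P (nfMul x (P y) + nfMul (P x) y - nfMul (P x) (P y)))
    (hψ : ∀ t, 1 ≤ t → t ≤ n / 2 → ψ t = 0) :
    ∀ r s, n / 2 < r → r < s → s ≤ n → ψ r = 0 ∨ ψ s = 0 := by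
  intro r s hr hrs hsn
  obtain ⟨a, rfl⟩ : ∃ a, s = a + r := ⟨s - r, by omega⟩
  exact mul_eq_zero.mp <| mul_eq_zero_of_reynolds_of_eq_zero hP hRey
    (by omega) (by omega) hsn (hψ a (by omega) (by omega))

/-- Reynolds operator, homogeneous of degree `0`, case (b): if `ψ` vanishes on
`{1, …, ⌊n/2⌋}`, then `ψ` is nonzero at most at one index. -/
theorem reynolds_degree0_case_b (n : ℕ) (hn : 1 ≤ n) (ψ : ℕ → ℂ)
    (P : NF n →ₗ[ℂ] NF n)
    (hP : ∀ i, 1 ≤ i → i ≤ n → P (nfE n i) = ψ i • nfE n i)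
    (hRey : ∀ x y : NF n,
      nfMul (P x) (P y) =
        P (nfMul x (P y) + nfMul (P x) y - nfMul (P x) (P y)))
    (hψ : ∀ t, 1 ≤ t → t ≤ n / 2 → ψ t = 0) :
    ∀ r s, n / 2 < r → r < s → s ≤ n → ψ r = 0 ∨ ψ s = 0 :=
  reynolds_degree0_case_b_general n ψ P hP hRey hψ
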